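/- arXiv:2309.12290 — 2 statements merged into one kernel-verified Lean document; each statement's English description precedes it below -/
import Mathlib

section
/- For each unit vector a ∈ R^3, the quantity α := (1/2)(1 - (1/4) Σ_{s_x,s_y,s_z = ±1} Θ(a · v_{s_x s_y s_z})) is nonnegative, where v_{s_x s_y s_z} = (s_x, s_y, s_z)^T and Θ(t) = max(t, 0). -/
open RealInnerProductSpace

/-- The vertex `(s_x, s_y, s_z)` of the cube `[-1,1]^3`, signs encoded by booleans. -/
noncomputable def cubeVtx (s : Fin 3 → Bool) : EuclideanSpace ℝ (Fin 3) :=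
  WithLp.toLp 2 (fun k => if s k then (1 : ℝ) else -1)

/-! `max t 0 ≤ t / 2 + (1 + t²) / 4` for every real `t`. Summed over the eight vertices `v`,
the linear terms cancel because the vertices come in antipodal pairs, and the quadratic terms
give `∑ ⟪a, v⟫² = 8 ‖a‖² = 8`; hence `∑ max ⟪a, v⟫ 0 ≤ (8 + 8) / 4 = 4`. -/

open Matrix in
theorem Fintype.sum_pi_fin_succ {α M : Type*} [Fintype α] [AddCommMonoid M] {n : ℕ}
    (f : (Fin (n + 1) → α) → M) : ∑ s, f s = ∑ x, ∑ s : Fin n → α, f (vecCons x s) := by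
  rw [← (Fin.consEquiv fun _ => α).sum_comp, Fintype.sum_prod_type]
  rfl

lemma max_zero_le_quadratic (x : ℝ) : max x 0 ≤ x / 2 + (1 + x ^ 2) / 4 :=
  max_le (by nlinarith [sq_nonneg (x - 1)]) (by nlinarith [sq_nonneg (x + 1)])

lemma cubeVtx_not (s : Fin 3 → Bool) : cubeVtx (fun k => !s k) = -cubeVtx s := by
  ext k
  simp only [cubeVtx, PiLp.neg_apply]
  cases s k <;> norm_num

lemma sum_inner_cubeVtx (a : EuclideanSpace ℝ (Fin 3)) : ∑ s, ⟪a, cubeVtx s⟫ = 0 := by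
  have h : ∑ s, -⟪a, cubeVtx s⟫ = ∑ s, ⟪a, cubeVtx s⟫ :=
    Fintype.sum_equiv (Equiv.piCongrRight fun _ => Equiv.boolNot) _ _ fun s => by
      rw [← inner_neg_right, ← cubeVtx_not]; rfl
  rw [Finset.sum_neg_distrib] at h
  linarith

lemma sum_inner_cubeVtx_sq (a : EuclideanSpace ℝ (Fin 3)) :
    ∑ s, ⟪a, cubeVtx s⟫ ^ 2 = 8 * ‖a‖ ^ 2 := by
  rw [EuclideanSpace.norm_eq, Real.sq_sqrt (by positivity)]
  simp [Fintype.sum_pi_fin_succ, cubeVtx, PiLp.inner_apply, Fin.sum_univ_three]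
  ring

theorem alpha_nonneg (a : EuclideanSpace ℝ (Fin 3)) (ha : ‖a‖ = 1) :
    0 ≤ (1 / 2) * (1 - (1 / 4) * ∑ s : Fin 3 → Bool, max ⟪a, cubeVtx s⟫ 0) := by
  have h : ∑ s : Fin 3 → Bool, max ⟪a, cubeVtx s⟫ 0 ≤ 4 :=
    calc ∑ s : Fin 3 → Bool, max ⟪a, cubeVtx s⟫ 0
        ≤ ∑ s : Fin 3 → Bool, (⟪a, cubeVtx s⟫ / 2 + (1 + ⟪a, cubeVtx s⟫ ^ 2) / 4) :=
          Finset.sum_le_sum fun s _ => max_zero_le_quadratic _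
      _ = (∑ s, ⟪a, cubeVtx s⟫) / 2 + (8 + ∑ s, ⟪a, cubeVtx s⟫ ^ 2) / 4 := by
          simp [Finset.sum_add_distrib, ← Finset.sum_div]
      _ = 4 := by rw [sum_inner_cubeVtx, sum_inner_cubeVtx_sq, ha]; norm_num
  linarith
end

section
/- For a unit vector a ∈ R^3 and p ≥ 0, the operator A = (p/2)(I + (1/2) a·σ) satisfies A = Σ_{s_x,s_y,s_z=±1} p·Θ(a · v_{s_x s_y s_z}) G_{s_x s_y s_z} + α·I, where G_{s_x s_y s_z} = (1/16)(2I + v_{s_x s_y s_z}·σ), Θ(t) = max(t,0), and α = (p/2)(1 - (1/4) Σ_{s_x,s_y,s_z=±1} Θ(a · v_{s_x s_y s_z})). -/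
open RealInnerProductSpace Matrix

noncomputable def σx : Matrix (Fin 2) (Fin 2) ℂ := !![0, 1; 1, 0]
noncomputable def σy : Matrix (Fin 2) (Fin 2) ℂ := !![0, -Complex.I; Complex.I, 0]
noncomputable def σz : Matrix (Fin 2) (Fin 2) ℂ := !![1, 0; 0, -1]

/-- `b·σ` for `b ∈ ℝ³`. -/
noncomputable def dotSigma (b : EuclideanSpace ℝ (Fin 3)) : Matrix (Fin 2) (Fin 2) ℂ :=
  b 0 • σx + b 1 • σy + b 2 • σz

/-- The coarse-grained octant operator `G_{s_x s_y s_z} = (1/16)(2𝟙 + v_s·σ)`. -/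
noncomputable def Goct (s : Fin 3 → Bool) : Matrix (Fin 2) (Fin 2) ℂ :=
  ((1 : ℝ) / 16) • ((2 : ℝ) • (1 : Matrix (Fin 2) (Fin 2) ℂ) + dotSigma (cubeVtx s))

/-!
`G_s` is affine in `v_s`, so `∑ₛ cₛ G_s = (∑ₛ cₛ / 8) 𝟙 + (1/16) (∑ₛ cₛ v_s)·σ`. The cube vertices
come in antipodal pairs and `Θ(t) - Θ(-t) = t`, hence `∑ₛ Θ(a·v_s) v_s = ½ ∑ₛ (a·v_s) v_s = 4a`,
the last step because the vertices form a tight frame: `∑ₛ v_s v_sᵀ = 8 I`.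
-/

open Finset

theorem sum_max_inner_zero_smul_of_neg {ι E : Type*} [Fintype ι] [NormedAddCommGroup E]
    [InnerProductSpace ℝ E] (v : ι → E) (e : ι ≃ ι) (he : ∀ i, v (e i) = -v i) (a : E) :
    (2 : ℝ) • ∑ i, max ⟪a, v i⟫ 0 • v i = ∑ i, ⟪a, v i⟫ • v i := by
  have hflip : ∑ i, max ⟪a, v i⟫ 0 • v i = -∑ i, max (-⟪a, v i⟫) 0 • v i := by
    rw [← e.sum_comp, ← sum_neg_distrib]
    simp only [he, inner_neg_right, smul_neg]
  calc (2 : ℝ) • ∑ i, max ⟪a, v i⟫ 0 • v i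
      = ∑ i, max ⟪a, v i⟫ 0 • v i - ∑ i, max (-⟪a, v i⟫) 0 • v i := by
        rw [two_smul, sub_eq_add_neg, ← hflip]
    _ = ∑ i, ⟪a, v i⟫ • v i := by
        simp only [← sum_sub_distrib, ← sub_smul, max_zero_sub_max_neg_zero_eq_self]

theorem cubeVtx_comp_not (s : Fin 3 → Bool) : cubeVtx (not ∘ s) = -cubeVtx s := by
  ext k
  cases h : s k <;> simp [cubeVtx, h]

theorem sum_inner_cubeVtx_smul (a : EuclideanSpace ℝ (Fin 3)) :
    ∑ s, ⟪a, cubeVtx s⟫ • cubeVtx s = (8 : ℝ) • a := by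
  ext k
  simp only [← (Fin.consEquiv fun _ => Bool).sum_comp, Fintype.sum_prod_type, Fintype.sum_bool,
    Fintype.sum_unique]
  fin_cases k <;>
    simp +decide [cubeVtx, PiLp.inner_apply, Fin.sum_univ_succ, Fin.consEquiv] <;> ring

theorem sum_max_inner_cubeVtx_smul (a : EuclideanSpace ℝ (Fin 3)) :
    ∑ s, max ⟪a, cubeVtx s⟫ 0 • cubeVtx s = (4 : ℝ) • a := by
  have hnot : Function.Involutive fun s : Fin 3 → Bool => not ∘ s := fun s => by
    ext k
    simp
  have h := sum_max_inner_zero_smul_of_neg cubeVtx hnot.toPerm cubeVtx_comp_not a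
  rw [sum_inner_cubeVtx_smul, show (8 : ℝ) = 2 * 4 by norm_num, mul_smul] at h
  exact smul_right_injective _ two_ne_zero h

theorem dotSigma_add (b c : EuclideanSpace ℝ (Fin 3)) :
    dotSigma (b + c) = dotSigma b + dotSigma c := by
  simp only [dotSigma, PiLp.add_apply, add_smul]
  abel

theorem dotSigma_smul (r : ℝ) (b : EuclideanSpace ℝ (Fin 3)) :
    dotSigma (r • b) = r • dotSigma b := by
  simp only [dotSigma, PiLp.smul_apply, smul_eq_mul, mul_smul, smul_add]

theorem sum_smul_Goct (c : (Fin 3 → Bool) → ℝ) :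
    ∑ s, c s • Goct s
      = ((∑ s, c s) / 8) • (1 : Matrix (Fin 2) (Fin 2) ℂ)
        + ((1 : ℝ) / 16) • dotSigma (∑ s, c s • cubeVtx s) := by
  have hsum : dotSigma (∑ s, c s • cubeVtx s) = ∑ s, c s • dotSigma (cubeVtx s) := by
    simpa only [AddMonoidHom.mk'_apply, dotSigma_smul] using
      map_sum (AddMonoidHom.mk' dotSigma dotSigma_add) (fun s => c s • cubeVtx s) univ
  simp only [Goct, hsum, smul_add, sum_add_distrib, smul_sum, smul_smul, ← sum_smul, sum_div]
  congr 1
  · congr 1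
    exact sum_congr rfl fun s _ => by ring
  · exact sum_congr rfl fun s _ => by rw [mul_comm]

theorem povm_element_decomposition_general
    (a : EuclideanSpace ℝ (Fin 3)) (p : ℝ) :
    (p / 2) • ((1 : Matrix (Fin 2) (Fin 2) ℂ) + ((1 : ℝ) / 2) • dotSigma a)
      = ∑ s : Fin 3 → Bool, (p * max ⟪a, cubeVtx s⟫ 0) • Goct s
        + ((p / 2) * (1 - (1 / 4) * ∑ s : Fin 3 → Bool, max ⟪a, cubeVtx s⟫ 0)) •
            (1 : Matrix (Fin 2) (Fin 2) ℂ) := by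
  have hcube : ∑ s, (p * max ⟪a, cubeVtx s⟫ 0) • cubeVtx s = (p * 4) • a := by
    simp only [mul_smul, ← smul_sum, sum_max_inner_cubeVtx_smul]
  rw [sum_smul_Goct, hcube, dotSigma_smul, ← mul_sum]
  module

theorem povm_element_decomposition
    (a : EuclideanSpace ℝ (Fin 3)) (ha : ‖a‖ = 1) (p : ℝ) (hp : 0 ≤ p) :
    (p / 2) • ((1 : Matrix (Fin 2) (Fin 2) ℂ) + ((1 : ℝ) / 2) • dotSigma a)
      = ∑ s : Fin 3 → Bool, (p * max ⟪a, cubeVtx s⟫ 0) • Goct s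
        + ((p / 2) * (1 - (1 / 4) * ∑ s : Fin 3 → Bool, max ⟪a, cubeVtx s⟫ 0)) •
            (1 : Matrix (Fin 2) (Fin 2) ℂ) :=
  povm_element_decomposition_general a p
end
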